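/- arXiv:2406.08072 — 10 statements merged into one kernel-verified Lean document; each statement's English description precedes it below -/
import Mathlib

section
/- Let μ > 0 and λ ∈ ℂ with λ ≠ 0 and λ ≠ -1/μ. Then λ²/(1+μλ) is a negative real number if and only if λ ∈ (-∞, -1/μ) or |λ + 1/μ| = 1/μ. -/
/-!
Clear the denominator: the condition reads `λ² = r (1 + μλ)` with `r < 0`. Its imaginary part,
`2xy = rμy`, forces either `λ` real, where `λ²/(1 + μλ) < 0` means `1 + μλ < 0`, or `2x = rμ`,
after which the real part becomes `μ|λ|² + 2 Re λ = 0`, the equation of the circle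
`|λ + 1/μ| = 1/μ`. Conversely, `λ² + |λ|² (1 + μλ) = λ (λ + conj λ) + μ|λ|²λ = λ (2 Re λ + μ|λ|²)`,
so on that circle `λ² = -|λ|² (1 + μλ)`.
-/

open Complex Real

namespace Complex

lemma im_eq_zero_or_of_sq_eq_mul_one_add_mul {μ r : ℝ} {z : ℂ}
    (h : z ^ 2 = r * (1 + μ * z)) : z.im = 0 ∨ μ * normSq z + 2 * z.re = 0 := by
  have hre : z.re ^ 2 - z.im ^ 2 = r * (1 + μ * z.re) := by
    simpa [sq] using congrArg re h
  have him : 2 * z.re * z.im = r * μ * z.im := by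
    have := congrArg im h
    simp only [sq, mul_im, add_im, ofReal_re, ofReal_im, one_im] at this
    linarith
  rcases eq_or_ne z.im 0 with hy | hy
  · exact .inl hy
  · have h2x : 2 * z.re = r * μ := mul_right_cancel₀ hy (by linarith)
    right
    rw [normSq_apply]
    linear_combination (-μ) * hre + (1 + μ * z.re) * h2x

lemma sq_eq_neg_normSq_mul_one_add_mul {μ : ℝ} {z : ℂ} (h : μ * normSq z + 2 * z.re = 0) :
    z ^ 2 = -normSq z * (1 + μ * z) := by
  have hc : ((μ * normSq z + 2 * z.re : ℝ) : ℂ) = 0 := by rw [h, ofReal_zero]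
  have h2 := add_conj z
  push_cast at hc h2
  linear_combination z * h2 - mul_conj z + z * hc

lemma norm_add_inv_eq_inv_iff {μ : ℝ} (hμ : 0 < μ) (z : ℂ) :
    ‖z + (1 / μ : ℝ)‖ = 1 / μ ↔ μ * normSq z + 2 * z.re = 0 := by
  have key : normSq (z + (1 / μ : ℝ)) - (1 / μ) ^ 2 = (μ * normSq z + 2 * z.re) / μ := by
    simp only [normSq_apply, add_re, add_im, ofReal_re, ofReal_im, add_zero]
    field_simp
    ring
  rw [← sq_eq_sq₀ (norm_nonneg _) (by positivity), Complex.sq_norm, ← sub_eq_zero, key,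
    div_eq_zero_iff, or_iff_left hμ.ne']

end Complex

lemma sq_div_one_add_mul_neg_iff {μ x : ℝ} (hμ : 0 < μ) (hx : x ≠ 0) :
    x ^ 2 / (1 + μ * x) < 0 ↔ x < -(1 / μ) := by
  have hx2 : 0 < x ^ 2 := by positivity
  rw [div_neg_iff, lt_neg, div_lt_iff₀ hμ]
  constructor
  · rintro (⟨-, h⟩ | ⟨h, -⟩) <;> linarith
  · intro h
    exact .inl ⟨hx2, by linarith⟩

theorem stmt_0 (μ : ℝ) (hμ : 0 < μ) (l : ℂ) (hl0 : l ≠ 0) (hl1 : l ≠ -(1 / μ : ℝ)) :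
    (∃ r : ℝ, r < 0 ∧ l ^ 2 / (1 + (μ : ℂ) * l) = (r : ℂ)) ↔
      ((∃ r : ℝ, r < -(1 / μ) ∧ l = (r : ℂ)) ∨ ‖l + (1 / μ : ℝ)‖ = 1 / μ) := by
  have hd : 1 + (μ : ℂ) * l ≠ 0 := by
    contrapose! hl1
    have hμ' : (μ : ℂ) ≠ 0 := ofReal_ne_zero.2 hμ.ne'
    push_cast
    field_simp
    linear_combination hl1
  rw [norm_add_inv_eq_inv_iff hμ]
  constructor
  · rintro ⟨r, hr, h⟩
    rcases im_eq_zero_or_of_sq_eq_mul_one_add_mul ((div_eq_iff hd).1 h) with hy | hcirc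
    · have hl : l = (l.re : ℂ) := ext rfl (by simp [hy])
      have hre0 : l.re ≠ 0 := fun h0 => hl0 (by rw [hl, h0, ofReal_zero])
      rw [hl] at h
      norm_cast at h
      exact .inl ⟨l.re, (sq_div_one_add_mul_neg_iff hμ hre0).1 (h ▸ hr), hl⟩
    · exact .inr hcirc
  · rintro (⟨x, hx, rfl⟩ | hcirc)
    · have hx0 : x ≠ 0 := by exact_mod_cast hl0
      exact ⟨x ^ 2 / (1 + μ * x), (sq_div_one_add_mul_neg_iff hμ hx0).2 hx, by push_cast; rfl⟩
    · exact ⟨-normSq l, neg_lt_zero.2 (normSq_pos.2 hl0),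
        (div_eq_iff hd).2 (by rw [ofReal_neg]; exact sq_eq_neg_normSq_mul_one_add_mul hcirc)⟩
end

section
/- Let λ = ρ·exp(iφ) with ρ > 0 and λ ≠ -1. Then λ²/(1+λ) is a negative real number if and only if (φ = π and ρ > 1) or (2cos(φ) + ρ = 0). -/
/-!
Writing `λ = a + b i`, the equation `λ² = r (1 + λ)` with `r` real splits into
`a² - b² = r (1 + a)` and `2ab = rb`. For real `λ` this forces `r = a² / (1 + a)`, which is
negative exactly when `a < -1`. For non-real `λ` it forces `r = 2a`, and then the real part
becomes `a² + b² + 2a = 0`, i.e. `λ` lies on the unit circle around `-1`; in polar form this is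
`ρ (ρ + 2 cos φ) = 0`.
-/

open Real

theorem mul_sin_eq_zero_and_mul_cos_lt_neg_one_iff {ρ φ : ℝ} (hρ : 0 < ρ)
    (hφ : φ ∈ Set.Ioc (-π) π) :
    (ρ * sin φ = 0 ∧ ρ * cos φ < -1) ↔ (φ = π ∧ 1 < ρ) := by
  constructor
  · rintro ⟨hsin, hcos⟩
    rcases eq_or_lt_of_le hφ.2 with hπ | hlt
    · rw [hπ, cos_pi] at hcos
      exact ⟨hπ, by linarith⟩
    · have h0 : φ = 0 :=
        (sin_eq_zero_iff_of_lt_of_lt hφ.1 hlt).1 ((mul_eq_zero.1 hsin).resolve_left hρ.ne')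
      rw [h0, cos_zero] at hcos
      linarith
  · rintro ⟨rfl, h⟩
    simp only [sin_pi, cos_pi]
    exact ⟨mul_zero ρ, by linarith⟩

namespace Complex

theorem normSq_ofReal_mul_exp_mul_I (ρ φ : ℝ) :
    normSq (ρ * exp (φ * I)) = ρ ^ 2 := by
  simp [sq, normSq_eq_norm_sq]

theorem sq_div_one_add_eq_ofReal_iff {z : ℂ} (hz : z ≠ -1) (r : ℝ) :
    z ^ 2 / (1 + z) = r ↔
      z.re ^ 2 - z.im ^ 2 = r * (1 + z.re) ∧ 2 * z.re * z.im = r * z.im := by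
  have hz' : 1 + z ≠ 0 := fun h => hz (by linear_combination h)
  rw [div_eq_iff hz', Complex.ext_iff]
  simp only [sq, mul_re, mul_im, add_re, add_im, one_re, one_im, ofReal_re, ofReal_im]
  constructor <;> rintro ⟨h1, h2⟩ <;> exact ⟨by linear_combination h1, by linear_combination h2⟩

theorem exists_neg_sq_div_one_add_iff {z : ℂ} (hz : z ≠ -1) :
    (∃ r : ℝ, r < 0 ∧ z ^ 2 / (1 + z) = r) ↔
      (z.im = 0 ∧ z.re < -1) ∨ (z ≠ 0 ∧ normSq z + 2 * z.re = 0) := by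
  simp only [sq_div_one_add_eq_ofReal_iff hz, normSq_apply]
  constructor
  · rintro ⟨r, hr, h1, h2⟩
    by_cases him : z.im = 0
    · have hre : z.re ≠ -1 := fun hre => hz (Complex.ext (by simpa) (by simpa))
      refine .inl ⟨him, lt_of_not_ge fun ha => ?_⟩
      have ha' : 0 < 1 + z.re := by linarith [lt_of_le_of_ne ha hre.symm]
      rw [him] at h1
      nlinarith [mul_neg_of_neg_of_pos hr ha']
    · have hr2 : r = 2 * z.re := mul_right_cancel₀ him (by linear_combination -h2)
      refine .inr ⟨fun h => him (by simp [h]), ?_⟩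
      rw [hr2] at h1
      linear_combination -h1
  · rintro (⟨him, ha⟩ | ⟨hz0, hcircle⟩)
    · refine ⟨z.re ^ 2 / (1 + z.re), div_neg_of_pos_of_neg (by nlinarith) (by linarith), ?_, ?_⟩
      · rw [him, div_mul_cancel₀ _ (by linarith)]
        ring
      · simp [him]
    · have hpos : 0 < z.re * z.re + z.im * z.im := by
        simpa only [normSq_apply] using normSq_pos.2 hz0
      exact ⟨2 * z.re, by linarith, by linear_combination -hcircle, by ring⟩

end Complex

open Complex

theorem stmt_1 (ρ φ : ℝ) (hρ : 0 < ρ) (hφ : φ ∈ Set.Ioc (-π) π)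
    (l : ℂ) (hl : l = (ρ : ℂ) * Complex.exp (φ * Complex.I)) (hl1 : l ≠ -1) :
    (∃ r : ℝ, r < 0 ∧ l ^ 2 / (1 + l) = (r : ℂ)) ↔
      ((φ = π ∧ 1 < ρ) ∨ 2 * Real.cos φ + ρ = 0) := by
  subst hl
  have hl0 : (ρ : ℂ) * exp (φ * I) ≠ 0 := mul_ne_zero (ofReal_ne_zero.2 hρ.ne') (exp_ne_zero _)
  rw [exists_neg_sq_div_one_add_iff hl1]
  simp only [re_ofReal_mul, im_ofReal_mul, exp_ofReal_mul_I_re, exp_ofReal_mul_I_im,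
    normSq_ofReal_mul_exp_mul_I]
  refine or_congr (mul_sin_eq_zero_and_mul_cos_lt_neg_one_iff hρ hφ) ?_
  rw [and_iff_right hl0]
  constructor <;> intro h
  · have h' : ρ * (2 * Real.cos φ + ρ) = 0 := by linear_combination h
    exact (mul_eq_zero.1 h').resolve_left hρ.ne'
  · linear_combination ρ * h
end

section
/- Let λ be a nonzero complex number with Re λ ≥ 0 and 1 + μλ ∉ (-∞, 0], where μ > 0. Define ω_λ = √(λ²/(1+μλ)) using the principal square root. Then Re(ω_λ/λ) ≥ 0. -/
/-!
With `s = 1 + μλ` and `u = √(s⁻¹)`, both `s` and `s⁻¹` lie in the open right half-plane, hence so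
does `u`. Moreover `Re (λu) > 0`: `Re λ · Re u ≥ 0`, and `Im λ · Im u < 0` unless `Im λ = 0`, because
`2 Re u · Im u = Im s⁻¹ = -μ Im λ / |s|²`. Since `λu` is a square root of `λ²/s` in the right
half-plane, it is the principal one, so `ω_λ / λ = u`.
-/

open Complex Real

theorem Complex.re_cpow_two_inv_pos {z : ℂ} (hz : 0 < z.re) : 0 < (z ^ (2⁻¹ : ℂ)).re := by
  rw [cpow_inv_two_re]
  exact Real.sqrt_pos.2 (by positivity)

theorem Complex.inv_re_pos {z : ℂ} (hz : 0 < z.re) : 0 < z⁻¹.re := by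
  rw [inv_re]
  exact div_pos hz (normSq_pos.2 fun h ↦ by simp [h] at hz)

theorem re_one_add_mul_pos {μ : ℝ} (hμ : 0 ≤ μ) {l : ℂ} (hre : 0 ≤ l.re) :
    0 < (1 + (μ : ℂ) * l).re := by
  simp only [add_re, one_re, re_ofReal_mul]
  positivity

theorem re_mul_cpow_two_inv_inv_one_add_mul_pos {μ : ℝ} (hμ : 0 < μ) {l : ℂ} (hl0 : l ≠ 0)
    (hre : 0 ≤ l.re) : 0 < (l * (1 + (μ : ℂ) * l)⁻¹ ^ (2⁻¹ : ℂ)).re := by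
  set s : ℂ := 1 + (μ : ℂ) * l
  set u : ℂ := s⁻¹ ^ (2⁻¹ : ℂ)
  have hs_re : 0 < s.re := re_one_add_mul_pos hμ.le hre
  have hu_re : 0 < u.re := re_cpow_two_inv_pos (inv_re_pos hs_re)
  have hu_im : l.im * u.im * (2 * u.re) = -(μ * l.im ^ 2) / normSq s := by
    have h : u.re * u.im + u.im * u.re = -s.im / normSq s := by
      rw [← mul_im, ← sq, ← inv_im]
      exact congrArg im (cpow_ofNat_inv_pow s⁻¹ 2)
    have hs_im : s.im = μ * l.im := by simp [s]
    rw [show l.im * u.im * (2 * u.re) = l.im * (u.re * u.im + u.im * u.re) by ring, h, hs_im]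
    ring
  rw [mul_re]
  rcases eq_or_ne l.im 0 with him | him
  · have hl_re : 0 < l.re := hre.lt_of_ne fun h ↦ hl0 (ext h.symm him)
    simpa [him] using mul_pos hl_re hu_re
  · have hs : 0 < normSq s := normSq_pos.2 fun h ↦ by simp [h] at hs_re
    have hneg : -(μ * l.im ^ 2) / normSq s < 0 :=
      div_neg_of_neg_of_pos (neg_neg_of_pos (by positivity)) hs
    have him_mul : l.im * u.im < 0 := by nlinarith
    nlinarith [mul_nonneg hre hu_re.le]

theorem cpow_two_inv_sq_div_one_add_mul {μ : ℝ} (hμ : 0 < μ) {l : ℂ} (hl0 : l ≠ 0)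
    (hre : 0 ≤ l.re) :
    (l ^ 2 / (1 + (μ : ℂ) * l)) ^ (2⁻¹ : ℂ) = l * (1 + (μ : ℂ) * l)⁻¹ ^ (2⁻¹ : ℂ) := by
  rw [← sq_cpow_two_inv (re_mul_cpow_two_inv_inv_one_add_mul_pos hμ hl0 hre), mul_pow,
    cpow_ofNat_inv_pow, div_eq_mul_inv]

theorem stmt_4_general (μ : ℝ) (hμ : 0 < μ) (l : ℂ) (hre : 0 ≤ l.re) :
    0 ≤ ((l ^ 2 / (1 + (μ : ℂ) * l)) ^ (1 / 2 : ℂ) / l).re := by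
  rcases eq_or_ne l 0 with rfl | hl0
  · simp
  rw [one_div, cpow_two_inv_sq_div_one_add_mul hμ hl0 hre, mul_div_cancel_left₀ _ hl0]
  exact (re_cpow_two_inv_pos (inv_re_pos (re_one_add_mul_pos hμ.le hre))).le

theorem stmt_4 (μ : ℝ) (hμ : 0 < μ) (l : ℂ) (hl0 : l ≠ 0) (hre : 0 ≤ l.re)
    (h : ¬∃ r : ℝ, r ≤ 0 ∧ 1 + (μ : ℂ) * l = (r : ℂ)) :
    0 ≤ ((l ^ 2 / (1 + (μ : ℂ) * l)) ^ (1 / 2 : ℂ) / l).re :=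
  stmt_4_general μ hμ l hre
end

section
/- Let a > 0, μ > 0 and let λ be a nonzero complex number with Re λ ≥ 0 such that λ²/(1+μλ) ∉ (-∞,0]. Set ω_λ = √(λ²/(1+μλ)). Then Re( λ(2 + 4a³/3) + 4a(μ + 1/λ) + 4a²λ/ω_λ ) ≥ 4aμ > 0; in particular this expression is nonzero. -/
/-!
Apart from `4aμ`, every summand has nonnegative real part. For `λ` and `1/λ` this is `Re λ ≥ 0`.
For `λ/ω` it suffices that `Re ω > 0` and `Im λ · Im ω ≥ 0`: the principal root of a point off
`(-∞, 0]` lies in the open right half-plane, and since `ω² = λ²/(1+μλ)` has imaginary part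
`2 Re ω Im ω`, `Im ω` has the sign of `Im (λ²/(1+μλ)) = Im λ (2 Re λ + μ|λ|²) / |1+μλ|²`.
-/

open Complex Real

namespace Complex

lemma mem_slitPlane_of_not_exists_nonpos_ofReal {x : ℂ} (h : ¬∃ r : ℝ, r ≤ 0 ∧ x = r) :
    x ∈ slitPlane := by
  rw [mem_slitPlane_iff_not_le_zero, le_def]
  rintro ⟨hre, him⟩
  exact h ⟨x.re, hre, ext rfl him⟩

lemma re_cpow_inv_two_pos {x : ℂ} (hx : x ∈ slitPlane) : 0 < (x ^ (2⁻¹ : ℂ)).re := by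
  rw [cpow_inv_two_re]
  refine Real.sqrt_pos.mpr (half_pos ?_)
  rcases mem_slitPlane_iff.mp hx with hre | him
  · linarith [norm_nonneg x]
  · linarith [neg_abs_le x.re, abs_re_lt_norm.mpr him]

lemma im_mul_im_cpow_inv_two_nonneg {x z : ℂ} (hx : x ∈ slitPlane) (h : 0 ≤ z.im * x.im) :
    0 ≤ z.im * (x ^ (2⁻¹ : ℂ)).im := by
  set ω := x ^ (2⁻¹ : ℂ)
  have hsq : x.im = 2 * ω.re * ω.im := by
    conv_lhs => rw [← cpow_ofNat_inv_pow x 2]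
    rw [sq, mul_im]
    ring
  have hω : 0 < ω.re := re_cpow_inv_two_pos hx
  rw [hsq] at h
  nlinarith

lemma re_div_nonneg {z w : ℂ} (hz : 0 ≤ z.re) (hw : 0 ≤ w.re) (him : 0 ≤ z.im * w.im) :
    0 ≤ (z / w).re := by
  rw [div_re]
  have := normSq_nonneg w
  positivity

lemma im_mul_im_sq_div_one_add_mul_nonneg {μ : ℝ} (hμ : 0 ≤ μ) {l : ℂ} (hl : 0 ≤ l.re) :
    0 ≤ l.im * (l ^ 2 / (1 + μ * l)).im := by
  have him : (l ^ 2 / (1 + μ * l)).im =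
      l.im * (2 * l.re + μ * (l.re ^ 2 + l.im ^ 2)) / normSq (1 + μ * l) := by
    rw [div_im]
    simp only [sq, add_re, add_im, one_re, one_im, mul_re, mul_im, ofReal_re, ofReal_im]
    ring
  rw [him, ← mul_div_assoc, ← mul_assoc, ← sq]
  have := normSq_nonneg (1 + μ * l)
  positivity

end Complex

theorem stmt_5_general (a μ : ℝ) (ha : 0 < a) (hμ : 0 < μ) (l : ℂ) (hre : 0 ≤ l.re)
    (h : ¬∃ r : ℝ, r ≤ 0 ∧ l ^ 2 / (1 + (μ : ℂ) * l) = (r : ℂ)) :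
    4 * a * μ ≤
        ((l * (2 + 4 * (a : ℂ) ^ 3 / 3) + 4 * (a : ℂ) * ((μ : ℂ) + 1 / l) +
            4 * (a : ℂ) ^ 2 * l / (l ^ 2 / (1 + (μ : ℂ) * l)) ^ (1 / 2 : ℂ)).re) ∧
      (0 : ℝ) < 4 * a * μ ∧
      l * (2 + 4 * (a : ℂ) ^ 3 / 3) + 4 * (a : ℂ) * ((μ : ℂ) + 1 / l) +
          4 * (a : ℂ) ^ 2 * l / (l ^ 2 / (1 + (μ : ℂ) * l)) ^ (1 / 2 : ℂ) ≠ 0 := by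
  set w := l ^ 2 / (1 + (μ : ℂ) * l)
  have hw : w ∈ slitPlane := mem_slitPlane_of_not_exists_nonpos_ofReal h
  rw [one_div (2 : ℂ)]
  set ω := w ^ (2⁻¹ : ℂ)
  have hinv : 0 ≤ (1 / l).re := re_div_nonneg zero_le_one hre (by simp)
  have hquot : 0 ≤ (l / ω).re := re_div_nonneg hre (re_cpow_inv_two_pos hw).le
    (im_mul_im_cpow_inv_two_nonneg hw (im_mul_im_sq_div_one_add_mul_nonneg hμ.le hre))
  have hsplit : l * (2 + 4 * (a : ℂ) ^ 3 / 3) + 4 * (a : ℂ) * ((μ : ℂ) + 1 / l) +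
      4 * (a : ℂ) ^ 2 * l / ω = ((2 + 4 * a ^ 3 / 3 : ℝ) : ℂ) * l + ((4 * a * μ : ℝ) : ℂ) +
        ((4 * a : ℝ) : ℂ) * (1 / l) + ((4 * a ^ 2 : ℝ) : ℂ) * (l / ω) := by
    push_cast
    ring
  have hbound : 4 * a * μ ≤ (l * (2 + 4 * (a : ℂ) ^ 3 / 3) + 4 * (a : ℂ) * ((μ : ℂ) + 1 / l) +
      4 * (a : ℂ) ^ 2 * l / ω).re := by
    rw [hsplit]
    simp only [add_re, re_ofReal_mul, ofReal_re]
    have : 0 ≤ (2 + 4 * a ^ 3 / 3) * l.re + 4 * a * (1 / l).re + 4 * a ^ 2 * (l / ω).re := by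
      positivity
    linarith
  have hpos : 0 < 4 * a * μ := by positivity
  refine ⟨hbound, hpos, fun hzero => ?_⟩
  rw [hzero, zero_re] at hbound
  linarith

theorem stmt_5 (a μ : ℝ) (ha : 0 < a) (hμ : 0 < μ) (l : ℂ) (hl0 : l ≠ 0) (hre : 0 ≤ l.re)
    (h : ¬∃ r : ℝ, r ≤ 0 ∧ l ^ 2 / (1 + (μ : ℂ) * l) = (r : ℂ)) :
    4 * a * μ ≤
        ((l * (2 + 4 * (a : ℂ) ^ 3 / 3) + 4 * (a : ℂ) * ((μ : ℂ) + 1 / l) +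
            4 * (a : ℂ) ^ 2 * l / (l ^ 2 / (1 + (μ : ℂ) * l)) ^ (1 / 2 : ℂ)).re) ∧
      (0 : ℝ) < 4 * a * μ ∧
      l * (2 + 4 * (a : ℂ) ^ 3 / 3) + 4 * (a : ℂ) * ((μ : ℂ) + 1 / l) +
          4 * (a : ℂ) ^ 2 * l / (l ^ 2 / (1 + (μ : ℂ) * l)) ^ (1 / 2 : ℂ) ≠ 0 :=
  stmt_5_general a μ ha hμ l hre h
end

section
/- Let a > 0, μ > 0. There exists a finite set S ⊂ {λ ∈ ℂ : Re λ < 0} with at most four elements such that for every λ ∈ ℂ satisfying λ ∉ (-∞, -1/μ], |λ + 1/μ| ≠ 1/μ, and λ ∉ S, the 2×2 matrix M_λ (with diagonal entries λ(1+8a³/3) + 2a(μ + 1/λ) + 4a²λ/ω_λ and off-diagonal entries -λ(1-4a³/3) - 2a(μ + 1/λ), where ω_λ = √(λ²/(1+μλ))) is invertible. -/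
/-!
The matrix has the form `!![A, B; B, A]`, so it is invertible iff `A + B ≠ 0` and `A - B ≠ 0`.
Off the ray `(-∞, -1/μ]` and the circle `|λ + 1/μ| = 1/μ` the number `λ² / (1 + μλ)` is not a
non-positive real, so `ω = √(λ² / (1 + μλ))` has positive real part. Then
`A + B = 4a²λ(a + 1/ω)` cannot vanish. For `Re λ ≥ 0` one has `λ/ω = √(1 + μλ)`, and every
term of `A - B = (2 + 4a³/3)λ + 4aμ + 4a/λ + 4a²√(1 + μλ)` has non-negative real part, `4aμ`
a positive one. For `Re λ < 0`, clearing `ω` from `A - B = 0` and squaring shows that `λ` is a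
root of a nonzero quartic, which has at most four roots.
-/

open Complex Real Matrix Polynomial

namespace Complex

lemma re_cpow_half_pos {z : ℂ} (hz : z ∈ slitPlane) : 0 < (z ^ (1 / 2 : ℂ)).re := by
  have hlt : z.arg < π := (arg_le_pi z).lt_of_ne (slitPlane_arg_ne_pi hz)
  have hgt : -π < z.arg := neg_pi_lt_arg z
  rw [cpow_def_of_ne_zero (slitPlane_ne_zero hz), exp_re]
  refine mul_pos (Real.exp_pos _) (Real.cos_pos_of_mem_Ioo ?_)
  have him : (log z * (1 / 2)).im = z.arg / 2 := by simp [log_im, div_eq_mul_inv]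
  rw [him]
  constructor <;> linarith

lemma sq_cpow_half {w : ℂ} (hw : 0 < w.re) : (w ^ 2) ^ (1 / 2 : ℂ) = w := by
  simpa using sq_cpow_two_inv hw

end Complex

lemma norm_add_inv_eq_of_sq_eq_ofReal_mul {μ t : ℝ} (hμ : 0 < μ) {l : ℂ} (hl : l.im ≠ 0)
    (h : l ^ 2 = t * (1 + μ * l)) : ‖l + (1 / μ : ℝ)‖ = 1 / μ := by
  have hre := congrArg re h
  have him := congrArg im h
  simp only [sq, mul_re, mul_im, add_re, add_im, one_re, one_im, ofReal_re, ofReal_im] at hre him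
  have hcentre : 2 * l.re = t * μ := mul_right_cancel₀ hl (by linarith)
  have hμ_inv : μ * (1 / μ) = 1 := mul_one_div_cancel hμ.ne'
  refine (sq_eq_sq₀ (norm_nonneg _) (by positivity)).1 ?_
  rw [Complex.sq_norm, normSq_apply]
  simp only [add_re, add_im, ofReal_re, ofReal_im, add_zero]
  linear_combination -hre + (l.re + 1 / μ) * hcentre + t * hμ_inv

lemma sq_div_one_add_mul_mem_slitPlane {μ : ℝ} (hμ : 0 < μ) {l : ℂ}
    (hray : ¬∃ r : ℝ, r ≤ -(1 / μ) ∧ l = r) (hcirc : ‖l + (1 / μ : ℝ)‖ ≠ 1 / μ) :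
    l ^ 2 / (1 + μ * l) ∈ slitPlane := by
  by_cases hl : l.im = 0
  · obtain ⟨r, rfl⟩ : ∃ r : ℝ, l = r := ⟨l.re, ext rfl (by simp [hl])⟩
    have hr : -(1 / μ) < r := by
      by_contra! h
      exact hray ⟨r, h, rfl⟩
    have hr0 : r ≠ 0 := by
      rintro rfl
      simp [abs_of_pos hμ] at hcirc
    have hden : 0 < 1 + μ * r := by
      have := mul_lt_mul_of_pos_left hr hμ
      rw [mul_neg, mul_one_div_cancel hμ.ne'] at this
      linarith
    exact_mod_cast ofReal_mem_slitPlane.2 (by positivity : 0 < r ^ 2 / (1 + μ * r))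
  · refine mem_slitPlane_iff.2 (.inr fun him => hcirc ?_)
    have hden : 1 + μ * l ≠ 0 := fun h => hl <| by
      have := congrArg im h
      simp only [add_im, one_im, zero_add, im_ofReal_mul, zero_im] at this
      exact (mul_eq_zero.1 this).resolve_left hμ.ne'
    refine norm_add_inv_eq_of_sq_eq_ofReal_mul hμ hl (t := (l ^ 2 / (1 + μ * l)).re) ?_
    rw [← div_eq_iff hden]
    exact ext rfl (by simp [him])

lemma re_div_pos_of_sq_eq_one_add_mul {μ : ℝ} (hμ : 0 < μ) {l v : ℂ} (hv : v ^ 2 = 1 + μ * l)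
    (hv_re : 0 < v.re) (hl : 0 ≤ l.re) (hl0 : l ≠ 0) : 0 < (l / v).re := by
  have hv_im : 2 * v.re * (l.im * v.im) = μ * l.im ^ 2 := by
    have := congrArg im hv
    simp only [sq, mul_im, add_im, one_im, ofReal_re, ofReal_im] at this
    linear_combination l.im * this
  have h2v : 0 < 2 * v.re := by positivity
  have hnormSq : 0 < normSq v := normSq_pos.2 (fun h => by simp [h] at hv_re)
  rw [div_re]
  rcases hl.eq_or_lt with hl_re | hl_re
  · have hl_im : l.im ≠ 0 := fun h => hl0 (ext hl_re.symm h)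
    have : 0 < l.im * v.im := (mul_pos_iff_of_pos_left h2v).1 (by rw [hv_im]; positivity)
    rw [← hl_re, zero_mul, zero_div, zero_add]
    positivity
  · have : 0 ≤ l.im * v.im := (mul_nonneg_iff_of_pos_left h2v).1 (by rw [hv_im]; positivity)
    positivity

lemma div_cpow_half_sq_div {μ : ℝ} (hμ : 0 < μ) {l : ℂ} (hl : 0 ≤ l.re) (hl0 : l ≠ 0) :
    l / (l ^ 2 / (1 + μ * l)) ^ (1 / 2 : ℂ) = (1 + μ * l) ^ (1 / 2 : ℂ) := by
  set v := (1 + μ * l) ^ (1 / 2 : ℂ)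
  have hv : v ^ 2 = 1 + μ * l := by simp [v]
  have hv_re : 0 < v.re := re_cpow_half_pos <| mem_slitPlane_iff.2 <| .inl <| by
    simp only [add_re, one_re, re_ofReal_mul]; positivity
  have hv0 : v ≠ 0 := fun h => by simp [h] at hv_re
  rw [← hv, ← div_pow, sq_cpow_half (re_div_pos_of_sq_eq_one_add_mul hμ hv hv_re hl hl0)]
  field_simp

lemma Matrix.isUnit_of_fin_two_symm_iff {K : Type*} [Field K] (x y : K) :
    IsUnit !![x, y; y, x] ↔ x + y ≠ 0 ∧ x - y ≠ 0 := by
  rw [isUnit_iff_isUnit_det, det_fin_two_of, isUnit_iff_ne_zero, ← mul_ne_zero_iff]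
  ring_nf

section

variable (a μ : ℝ)

noncomputable def diagEntry (l ω : ℂ) : ℂ :=
  l * (1 + 8 * (a : ℂ) ^ 3 / 3) + 2 * (a : ℂ) * ((μ : ℂ) + 1 / l) + 4 * (a : ℂ) ^ 2 * l / ω

noncomputable def offDiagEntry (l : ℂ) : ℂ :=
  -(l * (1 - 4 * (a : ℂ) ^ 3 / 3)) - 2 * (a : ℂ) * ((μ : ℂ) + 1 / l)

lemma diagEntry_add_offDiagEntry (l ω : ℂ) :
    diagEntry a μ l ω + offDiagEntry a μ l = 4 * (a : ℂ) ^ 2 * l * (a + ω⁻¹) := by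
  unfold diagEntry offDiagEntry; ring

lemma diagEntry_sub_offDiagEntry (l ω : ℂ) :
    diagEntry a μ l ω - offDiagEntry a μ l =
      ((2 + 4 * a ^ 3 / 3 : ℝ) : ℂ) * l + ((4 * a * μ : ℝ) : ℂ) + ((4 * a : ℝ) : ℂ) * l⁻¹
        + ((4 * a ^ 2 : ℝ) : ℂ) * (l / ω) := by
  unfold diagEntry offDiagEntry; push_cast; ring

/-- Obtained from `(diagEntry - offDiagEntry) * l * ω = 0` by isolating `ω`, squaring, and
substituting `ω ^ 2 = l ^ 2 / (1 + μ l)`. -/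
noncomputable def oddModePoly : ℂ[X] :=
  (C (2 + 4 * (a : ℂ) ^ 3 / 3) * X ^ 2 + C (4 * a * μ : ℂ) * X + C (4 * a : ℂ)) ^ 2
    - C (16 * (a : ℂ) ^ 4) * X ^ 2 * (1 + C (μ : ℂ) * X)

lemma natDegree_oddModePoly_le : (oddModePoly a μ).natDegree ≤ 4 := by
  unfold oddModePoly; compute_degree

variable {a μ}

lemma oddModePoly_ne_zero (ha : a ≠ 0) : oddModePoly a μ ≠ 0 := by
  intro h
  simpa [oddModePoly, ha] using congrArg (eval 0) h

lemma diagEntry_add_offDiagEntry_ne_zero (ha : 0 < a) {l ω : ℂ} (hl : l ≠ 0) (hω : 0 < ω.re) :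
    diagEntry a μ l ω + offDiagEntry a μ l ≠ 0 := by
  have hω0 : ω ≠ 0 := fun h => by simp [h] at hω
  have hre : 0 < ((a : ℂ) + ω⁻¹).re := by
    rw [add_re, ofReal_re, inv_re]
    have := normSq_pos.2 hω0
    positivity
  rw [diagEntry_add_offDiagEntry]
  refine mul_ne_zero (mul_ne_zero (by simp [ha.ne']) hl) fun h => ?_
  simp [h] at hre

lemma diagEntry_sub_offDiagEntry_ne_zero_of_re_nonneg (ha : 0 < a) (hμ : 0 < μ) {l : ℂ}
    (hl : 0 ≤ l.re) (hl0 : l ≠ 0) :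
    diagEntry a μ l ((l ^ 2 / (1 + μ * l)) ^ (1 / 2 : ℂ)) - offDiagEntry a μ l ≠ 0 := by
  have hv_re : 0 < ((1 + μ * l) ^ (1 / 2 : ℂ)).re := re_cpow_half_pos <| mem_slitPlane_iff.2 <|
    .inl <| by simp only [add_re, one_re, re_ofReal_mul]; positivity
  rw [diagEntry_sub_offDiagEntry, div_cpow_half_sq_div hμ hl hl0]
  have hl_inv : 0 ≤ (l⁻¹).re := by rw [inv_re]; exact div_nonneg hl (normSq_nonneg l)
  have hre : 0 < (((2 + 4 * a ^ 3 / 3 : ℝ) : ℂ) * l + ((4 * a * μ : ℝ) : ℂ) + ((4 * a : ℝ) : ℂ) * l⁻¹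
      + ((4 * a ^ 2 : ℝ) : ℂ) * (1 + μ * l) ^ (1 / 2 : ℂ)).re := by
    simp only [add_re, re_ofReal_mul, ofReal_re]
    positivity
  exact fun h => by rw [h, zero_re] at hre; exact hre.false

lemma eval_oddModePoly_eq_zero {l ω : ℂ} (hl : l ≠ 0) (hden : 1 + μ * l ≠ 0)
    (hω : ω ^ 2 = l ^ 2 / (1 + μ * l)) (h : diagEntry a μ l ω - offDiagEntry a μ l = 0) :
    (oddModePoly a μ).eval l = 0 := by
  have hω0 : ω ≠ 0 := fun h0 => by
    rw [h0, eq_comm, zero_pow two_ne_zero, div_eq_zero_iff] at hω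
    exact hω.elim (pow_ne_zero 2 hl) hden
  set q := (2 + 4 * (a : ℂ) ^ 3 / 3) * l ^ 2 + 4 * a * μ * l + 4 * a
  have hlin : q * ω + 4 * (a : ℂ) ^ 2 * l ^ 2 = 0 := by
    rw [← mul_zero (l * ω), ← h, diagEntry_sub_offDiagEntry]
    push_cast
    field_simp
    ring
  have hsq : q ^ 2 * ω ^ 2 = (4 * (a : ℂ) ^ 2 * l ^ 2) ^ 2 := by
    linear_combination (q * ω - 4 * (a : ℂ) ^ 2 * l ^ 2) * hlin
  rw [hω, mul_div_assoc', div_eq_iff hden] at hsq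
  have hq : q ^ 2 = 16 * (a : ℂ) ^ 4 * l ^ 2 * (1 + μ * l) :=
    mul_right_cancel₀ (pow_ne_zero 2 hl) (by linear_combination hsq)
  simp only [oddModePoly, eval_sub, eval_mul, eval_pow, eval_add, eval_C, eval_X, eval_one]
  linear_combination hq

end

theorem stmt_7 (a μ : ℝ) (ha : 0 < a) (hμ : 0 < μ) :
    ∃ S : Finset ℂ, S.card ≤ 4 ∧ (∀ s ∈ S, s.re < 0) ∧
      ∀ l : ℂ, (¬∃ r : ℝ, r ≤ -(1 / μ) ∧ l = (r : ℂ)) →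
        ‖l + (1 / μ : ℝ)‖ ≠ 1 / μ → l ∉ S →
        IsUnit (!![l * (1 + 8 * (a : ℂ) ^ 3 / 3) + 2 * (a : ℂ) * ((μ : ℂ) + 1 / l) +
              4 * (a : ℂ) ^ 2 * l / (l ^ 2 / (1 + (μ : ℂ) * l)) ^ (1 / 2 : ℂ),
            -(l * (1 - 4 * (a : ℂ) ^ 3 / 3)) - 2 * (a : ℂ) * ((μ : ℂ) + 1 / l);
            -(l * (1 - 4 * (a : ℂ) ^ 3 / 3)) - 2 * (a : ℂ) * ((μ : ℂ) + 1 / l),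
            l * (1 + 8 * (a : ℂ) ^ 3 / 3) + 2 * (a : ℂ) * ((μ : ℂ) + 1 / l) +
              4 * (a : ℂ) ^ 2 * l / (l ^ 2 / (1 + (μ : ℂ) * l)) ^ (1 / 2 : ℂ)]) := by
  refine ⟨(oddModePoly a μ).roots.toFinset.filter (·.re < 0), ?_,
    fun s hs => (Finset.mem_filter.1 hs).2, fun l hray hcirc hS => ?_⟩
  · exact (Finset.card_filter_le _ _).trans <| (Multiset.toFinset_card_le _).trans <|
      (card_roots' _).trans (natDegree_oddModePoly_le a μ)
  have hslit := sq_div_one_add_mul_mem_slitPlane hμ hray hcirc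
  obtain ⟨hl_sq, hden⟩ := div_ne_zero_iff.1 (slitPlane_ne_zero hslit)
  have hl0 : l ≠ 0 := (pow_ne_zero_iff two_ne_zero).1 hl_sq
  set ω := (l ^ 2 / (1 + (μ : ℂ) * l)) ^ (1 / 2 : ℂ)
  change IsUnit !![diagEntry a μ l ω, offDiagEntry a μ l; offDiagEntry a μ l, diagEntry a μ l ω]
  refine (isUnit_of_fin_two_symm_iff _ _).2
    ⟨diagEntry_add_offDiagEntry_ne_zero ha hl0 (re_cpow_half_pos hslit), fun h => ?_⟩
  rcases le_or_gt 0 l.re with hl_re | hl_re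
  · exact diagEntry_sub_offDiagEntry_ne_zero_of_re_nonneg ha hμ hl_re hl0 h
  · refine hS <| Finset.mem_filter.2 ⟨Multiset.mem_toFinset.2 <|
      (mem_roots (oddModePoly_ne_zero ha.ne')).2 ?_, hl_re⟩
    exact eval_oddModePoly_eq_zero hl0 hden (by simp [ω]) h
end

section
/- Let a > 0, μ > 0, and suppose λ satisfies λ ∉ (-∞,-1/μ], |λ+1/μ| ≠ 1/μ, and det M_λ = 0, where M_λ and ω_λ are as above. Then λ satisfies the polynomial identity (λ²(2 + 4a³/3) + 4a(μλ + 1))² = 16a⁴λ²(1 + μλ). In particular, det M_λ vanishes for at most four such values of λ. -/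
/-!
`M_λ` has the form `!![x, y; y, x]`, so `det M_λ = (x - y) (x + y)`. Here
`x + y = 4a²λ (aω_λ + 1) / ω_λ`, which cannot vanish because the principal square root `ω_λ` has
nonnegative real part while `a > 0`. Hence `x - y = 0`, i.e. `P(λ) ω_λ = -4a²λ²` with
`P(λ) = λ²(2 + 4a³/3) + 4a(μλ + 1)`; squaring and using `ω_λ² (1 + μλ) = λ²` eliminates the
square root and gives the quartic identity. A nonzero quartic has at most four roots.
-/

open Complex Real Matrix Polynomial

noncomputable def ω (μ : ℝ) (l : ℂ) : ℂ := (l ^ 2 / (1 + (μ : ℂ) * l)) ^ (1 / 2 : ℂ)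

noncomputable def M (a μ : ℝ) (l : ℂ) : Matrix (Fin 2) (Fin 2) ℂ :=
  !![l * (1 + 8 * (a : ℂ) ^ 3 / 3) + 2 * (a : ℂ) * ((μ : ℂ) + 1 / l) + 4 * (a : ℂ) ^ 2 * l / ω μ l,
    -(l * (1 - 4 * (a : ℂ) ^ 3 / 3)) - 2 * (a : ℂ) * ((μ : ℂ) + 1 / l);
    -(l * (1 - 4 * (a : ℂ) ^ 3 / 3)) - 2 * (a : ℂ) * ((μ : ℂ) + 1 / l),
    l * (1 + 8 * (a : ℂ) ^ 3 / 3) + 2 * (a : ℂ) * ((μ : ℂ) + 1 / l) + 4 * (a : ℂ) ^ 2 * l / ω μ l]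

theorem Matrix.det_fin_two_of_symm {R : Type*} [CommRing R] (x y : R) :
    !![x, y; y, x].det = (x - y) * (x + y) := by
  rw [det_fin_two_of]; ring

theorem Complex.re_cpow_half_nonneg (z : ℂ) : 0 ≤ (z ^ (1 / 2 : ℂ)).re := by
  have harg : z.arg * (1 / 2 : ℝ) ∈ Set.Icc (-(π / 2)) (π / 2) := by
    constructor <;> linarith [neg_pi_lt_arg z, arg_le_pi z]
  have hre := cpow_ofReal_re z (1 / 2)
  push_cast at hre
  rw [hre]
  exact mul_nonneg (by positivity) (Real.cos_nonneg_of_mem_Icc harg)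

theorem Polynomial.finite_and_ncard_le_natDegree {R : Type*} [CommRing R] [IsDomain R]
    {p : R[X]} (hp : p ≠ 0) {S : Set R} (hS : ∀ x ∈ S, p.IsRoot x) :
    S.Finite ∧ S.ncard ≤ p.natDegree := by
  have hfin : S.Finite := (finite_setOfPred_isRoot hp).subset hS
  refine ⟨hfin, ?_⟩
  rw [Set.ncard_eq_toFinset_card S hfin]
  refine card_le_degree_of_subset_roots fun x hx => ?_
  exact (mem_roots hp).2 (hS x (hfin.mem_toFinset.1 hx))

theorem ne_zero_of_norm_add_ofReal_ne {μ : ℝ} (hμ : 0 < μ) {l : ℂ}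
    (h : ‖l + (1 / μ : ℝ)‖ ≠ 1 / μ) : l ≠ 0 := by
  rintro rfl
  simp [abs_of_pos hμ] at h

theorem one_add_ofReal_mul_ne_zero {μ : ℝ} {l : ℂ} (h : ¬∃ r : ℝ, r ≤ -(1 / μ) ∧ l = (r : ℂ)) :
    1 + (μ : ℂ) * l ≠ 0 := by
  intro h0
  have hμ : (μ : ℂ) ≠ 0 := by rintro hμ; simp [hμ] at h0
  refine h ⟨-(1 / μ), le_rfl, ?_⟩
  push_cast
  field_simp
  linear_combination h0

theorem quartic_of_det_M_eq_zero {a μ : ℝ} {l : ℂ} (ha : 0 < a) (hl : l ≠ 0)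
    (hμl : 1 + (μ : ℂ) * l ≠ 0) (hdet : (M a μ l).det = 0) :
    (l ^ 2 * (2 + 4 * (a : ℂ) ^ 3 / 3) + 4 * (a : ℂ) * ((μ : ℂ) * l + 1)) ^ 2 =
      16 * (a : ℂ) ^ 4 * l ^ 2 * (1 + (μ : ℂ) * l) := by
  set w := ω μ l with hw
  have hw_sq : w ^ 2 * (1 + μ * l) = l ^ 2 := by
    rw [hw, ω, one_div, cpow_ofNat_inv_pow, div_mul_cancel₀ _ hμl]
  have hw0 : w ≠ 0 := by
    rintro h
    apply pow_ne_zero 2 hl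
    rw [← hw_sq, h]
    ring
  have haw : (a : ℂ) * w + 1 ≠ 0 := by
    intro h
    have hre : a * w.re + 1 = 0 := by simpa using congrArg re h
    have hw_re : 0 ≤ w.re := re_cpow_half_nonneg _
    nlinarith
  rw [M, ← hw, det_fin_two_of_symm] at hdet
  have hsum : l * (1 + 8 * (a : ℂ) ^ 3 / 3) + 2 * a * (μ + 1 / l) + 4 * a ^ 2 * l / w +
      (-(l * (1 - 4 * (a : ℂ) ^ 3 / 3)) - 2 * a * (μ + 1 / l)) =
        4 * a ^ 2 * l * (a * w + 1) / w := by
    field_simp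
    ring
  have hdiff := (mul_eq_zero.1 hdet).resolve_right (by
    rw [hsum]
    exact div_ne_zero (mul_ne_zero (mul_ne_zero (by simp [ha.ne']) hl) haw) hw0)
  set P := l ^ 2 * (2 + 4 * (a : ℂ) ^ 3 / 3) + 4 * a * (μ * l + 1)
  have hPw : P * w = -(4 * a ^ 2 * l ^ 2) := by
    field_simp at hdiff
    linear_combination hdiff / 3
  apply mul_right_cancel₀ (pow_ne_zero 2 hl)
  linear_combination (1 + (μ : ℂ) * l) * (P * w - 4 * a ^ 2 * l ^ 2) * hPw - P ^ 2 * hw_sq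

noncomputable def quarticPoly (a μ : ℝ) : ℂ[X] :=
  (C (2 + 4 * (a : ℂ) ^ 3 / 3) * X ^ 2 + C (4 * (a : ℂ)) * (C (μ : ℂ) * X + 1)) ^ 2 -
    C (16 * (a : ℂ) ^ 4) * X ^ 2 * (1 + C (μ : ℂ) * X)

theorem isRoot_quarticPoly_iff {a μ : ℝ} {l : ℂ} :
    (quarticPoly a μ).IsRoot l ↔
      (l ^ 2 * (2 + 4 * (a : ℂ) ^ 3 / 3) + 4 * (a : ℂ) * ((μ : ℂ) * l + 1)) ^ 2 =
        16 * (a : ℂ) ^ 4 * l ^ 2 * (1 + (μ : ℂ) * l) := by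
  rw [IsRoot, quarticPoly, eval_sub, sub_eq_zero]
  simp only [eval_mul, eval_pow, eval_add, eval_C, eval_X, eval_one]
  ring_nf

theorem quarticPoly_ne_zero {a : ℝ} (ha : a ≠ 0) (μ : ℝ) : quarticPoly a μ ≠ 0 := by
  intro h
  have h0 := congrArg (eval 0) h
  simp [quarticPoly, ha] at h0

theorem natDegree_quarticPoly_le (a μ : ℝ) : (quarticPoly a μ).natDegree ≤ 4 := by
  unfold quarticPoly
  compute_degree

theorem stmt_8 (a μ : ℝ) (ha : 0 < a) (hμ : 0 < μ) :
    (∀ l : ℂ, (¬∃ r : ℝ, r ≤ -(1 / μ) ∧ l = (r : ℂ)) →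
      ‖l + (1 / μ : ℝ)‖ ≠ 1 / μ →
      (!![l * (1 + 8 * (a : ℂ) ^ 3 / 3) + 2 * (a : ℂ) * ((μ : ℂ) + 1 / l) +
            4 * (a : ℂ) ^ 2 * l / (l ^ 2 / (1 + (μ : ℂ) * l)) ^ (1 / 2 : ℂ),
          -(l * (1 - 4 * (a : ℂ) ^ 3 / 3)) - 2 * (a : ℂ) * ((μ : ℂ) + 1 / l);
          -(l * (1 - 4 * (a : ℂ) ^ 3 / 3)) - 2 * (a : ℂ) * ((μ : ℂ) + 1 / l),
          l * (1 + 8 * (a : ℂ) ^ 3 / 3) + 2 * (a : ℂ) * ((μ : ℂ) + 1 / l) +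
            4 * (a : ℂ) ^ 2 * l / (l ^ 2 / (1 + (μ : ℂ) * l)) ^ (1 / 2 : ℂ)]).det = 0 →
      (l ^ 2 * (2 + 4 * (a : ℂ) ^ 3 / 3) + 4 * (a : ℂ) * ((μ : ℂ) * l + 1)) ^ 2 =
        16 * (a : ℂ) ^ 4 * l ^ 2 * (1 + (μ : ℂ) * l)) ∧
    ({l : ℂ | (¬∃ r : ℝ, r ≤ -(1 / μ) ∧ l = (r : ℂ)) ∧
      ‖l + (1 / μ : ℝ)‖ ≠ 1 / μ ∧
      (!![l * (1 + 8 * (a : ℂ) ^ 3 / 3) + 2 * (a : ℂ) * ((μ : ℂ) + 1 / l) +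
            4 * (a : ℂ) ^ 2 * l / (l ^ 2 / (1 + (μ : ℂ) * l)) ^ (1 / 2 : ℂ),
          -(l * (1 - 4 * (a : ℂ) ^ 3 / 3)) - 2 * (a : ℂ) * ((μ : ℂ) + 1 / l);
          -(l * (1 - 4 * (a : ℂ) ^ 3 / 3)) - 2 * (a : ℂ) * ((μ : ℂ) + 1 / l),
          l * (1 + 8 * (a : ℂ) ^ 3 / 3) + 2 * (a : ℂ) * ((μ : ℂ) + 1 / l) +
            4 * (a : ℂ) ^ 2 * l / (l ^ 2 / (1 + (μ : ℂ) * l)) ^ (1 / 2 : ℂ)]).det = 0}).Finite ∧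
    Set.ncard {l : ℂ | (¬∃ r : ℝ, r ≤ -(1 / μ) ∧ l = (r : ℂ)) ∧
      ‖l + (1 / μ : ℝ)‖ ≠ 1 / μ ∧
      (!![l * (1 + 8 * (a : ℂ) ^ 3 / 3) + 2 * (a : ℂ) * ((μ : ℂ) + 1 / l) +
            4 * (a : ℂ) ^ 2 * l / (l ^ 2 / (1 + (μ : ℂ) * l)) ^ (1 / 2 : ℂ),
          -(l * (1 - 4 * (a : ℂ) ^ 3 / 3)) - 2 * (a : ℂ) * ((μ : ℂ) + 1 / l);
          -(l * (1 - 4 * (a : ℂ) ^ 3 / 3)) - 2 * (a : ℂ) * ((μ : ℂ) + 1 / l),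
          l * (1 + 8 * (a : ℂ) ^ 3 / 3) + 2 * (a : ℂ) * ((μ : ℂ) + 1 / l) +
            4 * (a : ℂ) ^ 2 * l / (l ^ 2 / (1 + (μ : ℂ) * l)) ^ (1 / 2 : ℂ)]).det = 0} ≤ 4 := by
  have hquartic := fun (l : ℂ) h1 h2 (hdet : (M a μ l).det = 0) =>
    quartic_of_det_M_eq_zero ha (ne_zero_of_norm_add_ofReal_ne hμ h2)
      (one_add_ofReal_mul_ne_zero h1) hdet
  refine ⟨hquartic, (finite_and_ncard_le_natDegree (quarticPoly_ne_zero ha.ne' μ) ?_).imp id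
    (·.trans (natDegree_quarticPoly_le a μ))⟩
  rintro l ⟨h1, h2, hdet⟩
  exact isRoot_quarticPoly_iff.2 (hquartic l h1 h2 hdet)
end

section
/- Let μ > 0, θ ∈ [0, π/2), and let Σ_θ = {ρ e^{iφ} : ρ > 0, φ ∈ (-π/2 - θ, π/2 + θ)}. Then for every λ ∈ Σ_θ with |λ| ≥ 4/(μ(1 - sin θ)), the quantity λ²/(1+μλ) is not a negative real number. -/
/-!
If `l ^ 2 = r * (1 + μ * l)` with `r` real and `l` not real, the imaginary parts give
`2 * Re l = r * μ`, and then the real parts give `r = -‖l‖ ^ 2`; hence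
`μ * ‖l‖ ^ 2 = -2 * Re l ≤ 2 * ‖l‖`, i.e. `μ * ‖l‖ ≤ 2`. If instead `l` is a positive real,
then `r * (1 + μ * l) = l ^ 2 > 0` forces `r > 0`. The sector `Σ_θ` lies in the slit plane and
`‖l‖ ≥ 4 / (μ * (1 - sin θ))` gives `μ * ‖l‖ ≥ 4`, so neither case allows `r < 0`.
-/

open Complex Real

lemma ofReal_mul_exp_mul_I_mem_slitPlane {ρ φ : ℝ} (hρ : 0 < ρ) (hφ : φ ∈ Set.Ioo (-π) π) :
    (ρ : ℂ) * exp (φ * I) ∈ slitPlane := by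
  refine mem_slitPlane_iff_arg.mpr ⟨?_, by simp [hρ.ne']⟩
  rw [arg_real_mul _ hρ, arg_exp_mul_I, (toIocMod_eq_self _).mpr ⟨hφ.1, by linarith [hφ.2]⟩]
  exact hφ.2.ne

lemma mul_norm_le_two_of_sq_eq_mul_one_add_mul {l : ℂ} {μ r : ℝ}
    (h : l ^ 2 = r * (1 + μ * l)) (him : l.im ≠ 0) : μ * ‖l‖ ≤ 2 := by
  have hre : l.re ^ 2 - l.im ^ 2 = r * (1 + μ * l.re) := by
    simpa [sq] using congrArg re h
  have hre2 : 2 * l.re = r * μ := by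
    refine mul_right_cancel₀ him ?_
    have := congrArg im h
    simp only [sq, mul_im, add_im, one_im, ofReal_re, ofReal_im, add_re, one_re, mul_re] at this
    linear_combination this
  have hr : r = -‖l‖ ^ 2 := by
    rw [← Complex.normSq_eq_norm_sq, Complex.normSq_apply]
    linear_combination -hre + l.re * hre2
  have hpos : 0 < ‖l‖ := norm_pos_iff.mpr fun h0 => him (by simp [h0])
  have : μ * ‖l‖ * ‖l‖ ≤ 2 * ‖l‖ := by
    rw [hr] at hre2
    nlinarith [neg_abs_le l.re, Complex.abs_re_le_norm l]
  exact le_of_mul_le_mul_right this hpos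

lemma sq_div_one_add_mul_ne_of_neg {l : ℂ} {μ r : ℝ} (hl : l ∈ slitPlane)
    (hμl : 2 < μ * ‖l‖) (hr : r < 0) : l ^ 2 / (1 + μ * l) ≠ r := by
  intro h
  have hden : 1 + (μ : ℂ) * l ≠ 0 := by
    rintro hden
    rw [hden, div_zero, eq_comm, ofReal_eq_zero] at h
    exact hr.ne h
  rw [div_eq_iff hden] at h
  rcases mem_slitPlane_iff.mp hl with hre | him
  · have him : l.im = 0 := by
      by_contra him
      exact hμl.not_ge (mul_norm_le_two_of_sq_eq_mul_one_add_mul h him)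
    have hμ : 0 < μ := pos_of_mul_pos_left (by linarith) (norm_nonneg l)
    have := congrArg re h
    simp only [sq, mul_re, add_re, one_re, ofReal_re, ofReal_im, him, add_im, one_im, mul_im] at this
    nlinarith [mul_pos hμ hre]
  · exact hμl.not_ge (mul_norm_le_two_of_sq_eq_mul_one_add_mul h him)

theorem stmt_14 (μ θ : ℝ) (hμ : 0 < μ) (hθ : θ ∈ Set.Ico 0 (π / 2)) (l : ℂ)
    (hl : ∃ ρ φ : ℝ, 0 < ρ ∧ φ ∈ Set.Ioo (-(π / 2) - θ) (π / 2 + θ) ∧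
      l = (ρ : ℂ) * Complex.exp (φ * Complex.I))
    (habs : 4 / (μ * (1 - Real.sin θ)) ≤ ‖l‖) :
    ¬∃ r : ℝ, r < 0 ∧ l ^ 2 / (1 + (μ : ℂ) * l) = (r : ℂ) := by
  rintro ⟨r, hr, hrl⟩
  obtain ⟨ρ, φ, hρ, ⟨hφ₁, hφ₂⟩, rfl⟩ := hl
  obtain ⟨hθ₀, hθ₁⟩ := hθ
  have hsin₀ : 0 ≤ Real.sin θ := sin_nonneg_of_nonneg_of_le_pi hθ₀ (by linarith [pi_pos])
  have hsin₁ : Real.sin θ < 1 := by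
    simpa using sin_lt_sin_of_lt_of_le_pi_div_two (by linarith [pi_pos]) le_rfl hθ₁
  refine sq_div_one_add_mul_ne_of_neg
    (ofReal_mul_exp_mul_I_mem_slitPlane hρ ⟨by linarith, by linarith⟩) ?_ hr hrl
  have hnorm : ‖(ρ : ℂ) * exp (φ * I)‖ = ρ := by
    rw [norm_mul, norm_exp_ofReal_mul_I, norm_real, norm_of_nonneg hρ.le, mul_one]
  rw [hnorm] at habs ⊢
  rw [div_le_iff₀ (mul_pos hμ (by linarith))] at habs
  nlinarith [mul_pos hμ hρ]
end

section
/- Let μ > 0, θ ∈ [0, π/2), Σ_θ = {ρ e^{iφ} : ρ > 0, φ ∈ (-π/2 - θ, π/2 + θ)}. Then for every λ ∈ Σ_θ with |λ| ≥ 4/(μ(1 - sin θ)), one has Re √(λ²/(1+μλ)) ≥ (1/4)·√(|λ|(1 - sin θ)/μ). -/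
open Complex Real

/-!
Since `re √w = √((‖w‖ + re w) / 2)`, it suffices to bound `‖w‖ + re w` for `w = λ² / (1 + μλ)`.
With `ρ = |λ|`, `x = re λ` and `E = |1 + μλ|` one has
`‖w‖ + re w = (ρ²E + 2x² - ρ² + μρ²x) / E²`. The estimate `ρE ≥ μρ² + x` bounds the numerator
below by `(ρ + x) ρ (μρ - 3)`, and `E ≤ 1 + μρ` bounds the denominator, so that
`‖w‖ + re w ≥ (ρ + x) / (8μ)` as soon as `μρ ≥ 4`. On the sector `Σ_θ`, `x ≥ -ρ sin θ`.
-/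

namespace Complex

theorem sq_norm_one_add_ofReal_mul (μ : ℝ) (l : ℂ) :
    ‖1 + μ * l‖ ^ 2 = 1 + 2 * μ * l.re + μ ^ 2 * ‖l‖ ^ 2 := by
  rw [Complex.sq_norm, Complex.sq_norm, normSq_add]
  simp only [normSq_one, normSq_ofReal, one_mul, map_mul, conj_ofReal, mul_re, ofReal_re,
    ofReal_im, conj_re, conj_im]
  ring

theorem re_sq_div_one_add_ofReal_mul (μ : ℝ) (l : ℂ) :
    (l ^ 2 / (1 + μ * l)).re = (2 * l.re ^ 2 - ‖l‖ ^ 2 + μ * ‖l‖ ^ 2 * l.re) / ‖1 + μ * l‖ ^ 2 := by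
  rw [div_re, ← add_div, ← Complex.sq_norm, Complex.sq_norm l, normSq_apply]
  congr 1
  simp only [pow_two, mul_re, mul_im, add_re, add_im, one_re, one_im, ofReal_re, ofReal_im]
  ring

theorem norm_add_re_div_eight_le_norm_add_re_sq_div (μ : ℝ) (l : ℂ) (hμ : 0 < μ)
    (hl : 4 ≤ μ * ‖l‖) :
    (‖l‖ + l.re) / (8 * μ) ≤ ‖l ^ 2 / (1 + μ * l)‖ + (l ^ 2 / (1 + μ * l)).re := by
  rw [norm_div, norm_pow, re_sq_div_one_add_ofReal_mul]
  set ρ := ‖l‖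
  set x := l.re
  set E := ‖1 + μ * l‖
  have hx : |x| ≤ ρ := abs_re_le_norm l
  have hρ : 0 < ρ := by nlinarith
  have hE2 : E ^ 2 = 1 + 2 * μ * x + μ ^ 2 * ρ ^ 2 := sq_norm_one_add_ofReal_mul μ l
  have hE_upper : E ≤ 1 + μ * ρ := by
    calc E ≤ ‖(1 : ℂ)‖ + ‖(μ : ℂ) * l‖ := norm_add_le _ _
      _ = 1 + μ * ρ := by rw [norm_one, norm_mul, norm_real, norm_of_nonneg hμ.le]
  -- `(μρ² + x)² ≤ ρ² E²` amounts to `x² ≤ ρ²`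
  have hE_lower : μ * ρ ^ 2 + x ≤ ρ * E := by
    apply abs_le_of_sq_le_sq' _ (by positivity) |>.2
    rw [mul_pow, hE2]
    nlinarith [sq_abs x, abs_nonneg x]
  have hE : 0 < E := by nlinarith [neg_abs_le x]
  have hsum : ρ ^ 2 / E + (2 * x ^ 2 - ρ ^ 2 + μ * ρ ^ 2 * x) / E ^ 2
      = (ρ ^ 2 * E + (2 * x ^ 2 - ρ ^ 2 + μ * ρ ^ 2 * x)) / E ^ 2 := by
    field_simp
  rw [hsum, div_le_div_iff₀ (by positivity) (by positivity)]
  have hρx : 0 ≤ ρ + x := by linarith [neg_abs_le x]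
  have hnum : (ρ + x) * ρ * (μ * ρ - 3) ≤ ρ ^ 2 * E + (2 * x ^ 2 - ρ ^ 2 + μ * ρ ^ 2 * x) := by
    nlinarith [mul_le_mul_of_nonneg_left hE_lower hρ.le, sq_nonneg (ρ + x)]
  calc (ρ + x) * E ^ 2 ≤ (ρ + x) * (8 * (μ * ρ) * (μ * ρ - 3)) := by
        gcongr
        nlinarith
    _ = (ρ + x) * ρ * (μ * ρ - 3) * (8 * μ) := by ring
    _ ≤ _ := by gcongr

end Complex

theorem Real.neg_sin_le_cos_of_abs_le {θ φ : ℝ} (hθ : θ ≤ π / 2) (hφ : |φ| ≤ π / 2 + θ) :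
    -sin θ ≤ cos φ := by
  have h := cos_le_cos_of_nonneg_of_le_pi (abs_nonneg φ) (by linarith) hφ
  rwa [cos_abs, add_comm, cos_add_pi_div_two] at h

theorem stmt_15 (μ θ : ℝ) (hμ : 0 < μ) (hθ : θ ∈ Set.Ico 0 (π / 2)) (l : ℂ)
    (hl : ∃ ρ φ : ℝ, 0 < ρ ∧ φ ∈ Set.Ioo (-(π / 2) - θ) (π / 2 + θ) ∧
      l = (ρ : ℂ) * Complex.exp (φ * Complex.I))
    (habs : 4 / (μ * (1 - Real.sin θ)) ≤ ‖l‖) :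
    (1 / 4) * Real.sqrt (‖l‖ * (1 - Real.sin θ) / μ) ≤
      ((l ^ 2 / (1 + (μ : ℂ) * l)) ^ (1 / 2 : ℂ)).re := by
  obtain ⟨ρ, φ, hρ, hφ, rfl⟩ := hl
  set l := (ρ : ℂ) * Complex.exp (φ * Complex.I)
  have hnorm : ‖l‖ = ρ := by
    rw [norm_mul, norm_exp_ofReal_mul_I, norm_real, norm_of_nonneg hρ.le, mul_one]
  have hre : l.re = ρ * Real.cos φ := by simp [l, exp_ofReal_mul_I_re]
  have hs0 : 0 ≤ Real.sin θ :=
    Real.sin_nonneg_of_nonneg_of_le_pi hθ.1 (by linarith [hθ.2, pi_pos])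
  have hs1 : Real.sin θ < 1 := by
    simpa using Real.sin_lt_sin_of_lt_of_le_pi_div_two (by linarith [hθ.1, pi_pos]) le_rfl hθ.2
  have hcos : -Real.sin θ ≤ Real.cos φ :=
    neg_sin_le_cos_of_abs_le hθ.2.le (abs_lt.2 ⟨by linarith [hφ.1], hφ.2⟩).le
  have ht : 4 ≤ μ * ‖l‖ := by
    rw [div_le_iff₀ (by nlinarith)] at habs
    nlinarith
  have hmain := norm_add_re_div_eight_le_norm_add_re_sq_div μ l hμ ht
  rw [one_div (2 : ℂ), cpow_inv_two_re, ← sqrt_sq (by norm_num : (0:ℝ) ≤ 1 / 4),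
    ← sqrt_mul (by norm_num)]
  apply sqrt_le_sqrt
  rw [hnorm, hre] at hmain
  rw [hnorm]
  calc (1 / 4) ^ 2 * (ρ * (1 - Real.sin θ) / μ)
        = ρ * (1 - Real.sin θ) / (8 * μ) / 2 := by ring
    _ ≤ (ρ + ρ * Real.cos φ) / (8 * μ) / 2 := by gcongr; nlinarith
    _ ≤ _ := by gcongr
end

section
/- Let θ ∈ [0, π/2), ρ ≥ 4/(1 - sin θ), and φ ∈ (-π/2 - θ, π/2 + θ). Then √(1 + ρ² + 2ρ cos φ) + cos(2φ) + ρ cos φ ≥ (1/2)·ρ·(1 - sin θ). -/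
/-!
Bound the three terms separately: the square root is at least `ρ - 1` since `cos φ ≥ -1`,
`cos 2φ ≥ -1`, and `ρ cos φ > -ρ sin θ` because `|φ| < π/2 + θ ≤ π`. Their sum is at least
`ρ (1 - sin θ) - 2`, which is at least half of `ρ (1 - sin θ)` once the latter is `≥ 4`.
-/

open Real

lemma Real.neg_sin_lt_cos_of_abs_lt {θ φ : ℝ} (hθ : θ ≤ π / 2) (hφ : |φ| < π / 2 + θ) :
    -sin θ < cos φ := by
  have h := cos_lt_cos_of_nonneg_of_le_pi (abs_nonneg φ) (by linarith) hφ
  rwa [cos_abs, add_comm, cos_add_pi_div_two] at h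

lemma Real.sub_one_le_sqrt_one_add_sq_add_two_mul_cos (ρ φ : ℝ) :
    ρ - 1 ≤ √(1 + ρ ^ 2 + 2 * ρ * cos φ) := by
  rcases le_or_gt ρ 1 with hρ | hρ
  · exact (sub_nonpos.mpr hρ).trans (sqrt_nonneg _)
  · apply le_sqrt_of_sq_le
    nlinarith [neg_one_le_cos φ]

theorem stmt_16 (θ ρ φ : ℝ) (hθ : θ ∈ Set.Ico 0 (π / 2))
    (hρ : 4 / (1 - Real.sin θ) ≤ ρ) (hφ : φ ∈ Set.Ioo (-(π / 2) - θ) (π / 2 + θ)) :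
    (1 / 2) * ρ * (1 - Real.sin θ) ≤
      Real.sqrt (1 + ρ ^ 2 + 2 * ρ * Real.cos φ) + Real.cos (2 * φ) + ρ * Real.cos φ := by
  have hsin : sin θ < 1 := by
    simpa using sin_lt_sin_of_lt_of_le_pi_div_two (by linarith [hθ.1, pi_pos]) le_rfl hθ.2
  have hρsin : 4 ≤ ρ * (1 - sin θ) := (div_le_iff₀ (by linarith)).mp hρ
  have hρpos : 0 < ρ := by nlinarith
  have hcos : -sin θ < cos φ :=
    neg_sin_lt_cos_of_abs_lt hθ.2.le (abs_lt.mpr ⟨by linarith [hφ.1], hφ.2⟩)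
  have hρcos : -(ρ * sin θ) ≤ ρ * cos φ := by nlinarith
  linarith [sub_one_le_sqrt_one_add_sq_add_two_mul_cos ρ φ, neg_one_le_cos (2 * φ)]
end

section
/- For a > 0, μ > 0, θ ∈ [0,π/2) there exist R > 0 and c > 0 such that for all λ in the sector Σ_θ with |λ| ≥ R, setting ω_λ = √(λ²/(1+μλ)), one has |λ|/(2|ω_λ| Re ω_λ) ≤ c. -/
open Complex Real

set_option maxHeartbeats 1600000 in
theorem stmt_19 (a μ θ : ℝ) (ha : 0 < a) (hμ : 0 < μ) (hθ : θ ∈ Set.Ico 0 (π / 2)) :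
    ∃ R c : ℝ, 0 < R ∧ 0 < c ∧
      ∀ l : ℂ, (∃ ρ φ : ℝ, 0 < ρ ∧ φ ∈ Set.Ioo (-(π / 2) - θ) (π / 2 + θ) ∧
          l = (ρ : ℂ) * Complex.exp (φ * Complex.I)) →
        R ≤ ‖l‖ →
        ‖l‖ /
            (2 * ‖(l ^ 2 / (1 + (μ : ℂ) * l)) ^ (1 / 2 : ℂ)‖ *
              ((l ^ 2 / (1 + (μ : ℂ) * l)) ^ (1 / 2 : ℂ)).re) ≤ c := by
  obtain ⟨hθ0, hθ1⟩ := hθ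
  set t := Real.sin θ with ht
  have ht0 : 0 ≤ t := Real.sin_nonneg_of_nonneg_of_le_pi hθ0 (by linarith [Real.pi_pos])
  have ht1 : t < 1 := by
    have h := Real.sin_lt_sin_of_lt_of_le_pi_div_two (x := θ) (y := π / 2)
      (by linarith [Real.pi_pos]) le_rfl hθ1
    rwa [Real.sin_pi_div_two] at h
  set k : ℝ := (1 - t) / (16 * μ ^ 2) with hk
  have hkpos : 0 < k := div_pos (by linarith) (by positivity)
  refine ⟨max (2 / μ) (4 / (μ * (1 - t))), 1 / Real.sqrt (2 * k),
    lt_max_of_lt_left (div_pos two_pos hμ),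
    one_div_pos.mpr (Real.sqrt_pos.mpr (by linarith)),
    fun l hl hR => ?_⟩
  obtain ⟨ρ, φ, hρ, hφ, rfl⟩ := hl
  set L : ℂ := (ρ : ℂ) * Complex.exp (φ * Complex.I) with hL
  set r : ℝ := ‖L‖ with hr
  have hrρ : r = ρ := by
    rw [hr, hL, norm_mul, Complex.norm_exp_ofReal_mul_I, Complex.norm_real, Real.norm_eq_abs,
      abs_of_pos hρ, mul_one]
  have hr1 : 2 / μ ≤ r := le_trans (le_max_left _ _) hR
  have hr2 : 4 / (μ * (1 - t)) ≤ r := le_trans (le_max_right _ _) hR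
  have hrpos : 0 < r := lt_of_lt_of_le (by positivity) hr1
  have hμr : 2 ≤ μ * r := by
    rw [div_le_iff₀ hμ] at hr1; linarith [hr1]
  have hμtr : 4 ≤ μ * (1 - t) * r := by
    rw [div_le_iff₀ (by nlinarith : (0:ℝ) < μ * (1 - t))] at hr2; linarith [hr2]
  -- Re L ≥ -t * r
  have hcos : -t ≤ Real.cos φ := by
    have h1 : |φ| ≤ π / 2 + θ := by
      rcases hφ with ⟨h2, h3⟩
      rw [abs_le]; constructor <;> linarith
    have h2 : Real.cos (π / 2 + θ) ≤ Real.cos |φ| :=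
      Real.cos_le_cos_of_nonneg_of_le_pi (abs_nonneg φ)
        (by linarith [Real.pi_pos]) h1
    rw [add_comm, Real.cos_add_pi_div_two] at h2
    rwa [Real.cos_abs] at h2
  have hre : -(t * r) ≤ L.re := by
    have : L.re = ρ * Real.cos φ := by
      rw [hL]
      simp [Complex.mul_re, Complex.ofReal_re, Complex.ofReal_im,
        Complex.exp_ofReal_mul_I_re, Complex.exp_ofReal_mul_I_im]
    rw [this, hrρ]
    nlinarith [hρ, hcos]
  set b : ℂ := 1 + (μ : ℂ) * L with hb
  set N : ℝ := ‖b‖ with hN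
  have hNub : N ≤ 1 + μ * r := by
    rw [hN, hb]
    calc ‖1 + (μ : ℂ) * L‖ ≤ ‖(1 : ℂ)‖ + ‖(μ : ℂ) * L‖ :=
          norm_add_le _ _
      _ = 1 + μ * r := by
          rw [norm_one, norm_mul, Complex.norm_real, Real.norm_eq_abs, abs_of_pos hμ, hr]
  have hNlb : μ * r - 1 ≤ N := by
    have heq : (μ : ℂ) * L = b + (-1) := by rw [hb]; ring
    have h1 : μ * r = ‖b + (-1)‖ := by
      rw [← heq, norm_mul, Complex.norm_real, Real.norm_eq_abs, abs_of_pos hμ, hr]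
    have h2 : ‖b + (-1)‖ ≤ ‖b‖ + ‖(-1 : ℂ)‖ :=
      norm_add_le _ _
    rw [norm_neg, norm_one, ← hN] at h2
    linarith
  have hNpos : 0 < N := by linarith
  have hbne : b ≠ 0 := by
    intro h
    rw [hN, h, norm_zero] at hNpos
    exact lt_irrefl 0 hNpos
  -- w and its parts
  set w : ℂ := L ^ 2 / b with hw
  have habsw : ‖w‖ = r ^ 2 / N := by
    rw [hw, norm_div, norm_pow, ← hr, ← hN]
  have hrew : w.re = ((L ^ 2).re + μ * (r ^ 2 * L.re)) / N ^ 2 := by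
    rw [hw, Complex.div_re]
    have hbre : b.re = 1 + μ * L.re := by
      rw [hb]; simp [Complex.add_re, Complex.mul_re]
    have hbim : b.im = μ * L.im := by
      rw [hb]; simp [Complex.add_im, Complex.mul_im]
    have hnsq : Complex.normSq b = N ^ 2 := by
      rw [hN, Complex.sq_norm]
    have hL2re : (L ^ 2).re = L.re ^ 2 - L.im ^ 2 := by
      rw [sq]; simp [Complex.mul_re]; ring
    have hL2im : (L ^ 2).im = 2 * (L.re * L.im) := by
      rw [sq]; simp [Complex.mul_im]; ring
    have hrsq : r ^ 2 = L.re ^ 2 + L.im ^ 2 := by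
      rw [hr, Complex.sq_norm]; simp [Complex.normSq_apply]; ring
    rw [hnsq, hbre, hbim, hL2re, hL2im, hrsq]
    field_simp
    ring
  -- key inequality: |w| * (|w| + Re w) ≥ k * r^2
  have hL2 : -(r ^ 2) ≤ (L ^ 2).re := by
    have h1 := Complex.abs_re_le_norm (L ^ 2)
    rw [norm_pow, ← hr] at h1
    have := (abs_le.mp h1).1
    linarith
  clear_value t k L r b N w
  have hkey : k * r ^ 2 ≤ ‖w‖ * (‖w‖ + w.re) := by
    have hmain : k * N ^ 3 ≤ r ^ 2 * N + ((L ^ 2).re + μ * (r ^ 2 * L.re)) := by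
      have e1 : r ^ 2 * (μ * r - 1) ≤ r ^ 2 * N :=
        mul_le_mul_of_nonneg_left hNlb (sq_nonneg r)
      have e2 : μ * (r ^ 2 * (-(t * r))) ≤ μ * (r ^ 2 * L.re) := by
        apply mul_le_mul_of_nonneg_left _ hμ.le
        exact mul_le_mul_of_nonneg_left hre (sq_nonneg r)
      have h1 : r ^ 2 * (μ * r - 1) - r ^ 2 - μ * (r ^ 2 * (t * r)) ≤
          r ^ 2 * N + ((L ^ 2).re + μ * (r ^ 2 * L.re)) := by
        have := hL2
        nlinarith [e1, e2]
      have h2 : k * N ^ 3 ≤ k * (1 + μ * r) ^ 3 :=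
        mul_le_mul_of_nonneg_left (pow_le_pow_left₀ hNpos.le hNub 3) hkpos.le
      have h3 : 1 + μ * r ≤ 3 / 2 * (μ * r) := by linarith
      have hμrpos : 0 < μ * r := by linarith
      have h4 : k * (1 + μ * r) ^ 3 ≤ k * (3 / 2 * (μ * r)) ^ 3 :=
        mul_le_mul_of_nonneg_left (pow_le_pow_left₀ (by linarith) h3 3) hkpos.le
      have h6 : k * (3 / 2 * (μ * r)) ^ 3 = 27 / 128 * (μ * (1 - t) * r ^ 3) := by
        rw [hk]; field_simp; ring
      have h7 : 4 * r ^ 2 ≤ μ * (1 - t) * r * r ^ 2 :=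
        mul_le_mul_of_nonneg_right hμtr (sq_nonneg r)
      have hX : 0 ≤ μ * (1 - t) * r ^ 3 :=
        mul_nonneg (mul_nonneg hμ.le (by linarith)) (pow_nonneg hrpos.le 3)
      calc k * N ^ 3 ≤ 27 / 128 * (μ * (1 - t) * r ^ 3) := by linarith
        _ ≤ 1 / 2 * (μ * (1 - t) * r ^ 3) := by linarith
        _ ≤ μ * (1 - t) * r ^ 3 - 2 * r ^ 2 := by
            have h7' : 4 * r ^ 2 ≤ μ * (1 - t) * r ^ 3 := by
              calc 4 * r ^ 2 ≤ μ * (1 - t) * r * r ^ 2 := h7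
                _ = μ * (1 - t) * r ^ 3 := by ring
            linarith
        _ = r ^ 2 * (μ * r - 1) - r ^ 2 - μ * (r ^ 2 * (t * r)) := by ring
        _ ≤ r ^ 2 * N + ((L ^ 2).re + μ * (r ^ 2 * L.re)) := h1
    rw [habsw, hrew]
    have hN2 : (0:ℝ) < N ^ 2 := pow_pos hNpos 2
    have : r ^ 2 / N * (r ^ 2 / N + ((L ^ 2).re + μ * (r ^ 2 * L.re)) / N ^ 2) =
        r ^ 2 * (r ^ 2 * N + ((L ^ 2).re + μ * (r ^ 2 * L.re))) / N ^ 3 := by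
      field_simp
    rw [this, le_div_iff₀ (pow_pos hNpos 3)]
    calc k * r ^ 2 * N ^ 3 = r ^ 2 * (k * N ^ 3) := by ring
      _ ≤ r ^ 2 * (r ^ 2 * N + ((L ^ 2).re + μ * (r ^ 2 * L.re))) := by
          apply mul_le_mul_of_nonneg_left hmain (by positivity)
  -- the square root s
  set s : ℂ := w ^ (1 / 2 : ℂ) with hs
  have hs2 : s ^ 2 = w := by
    rw [hs, one_div]
    exact Complex.cpow_nat_inv_pow w (by norm_num)
  have habss : ‖s‖ ^ 2 = ‖w‖ := by
    rw [← norm_pow, hs2]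
  have hsre : s.re = Real.sqrt ((‖w‖ + w.re) / 2) := by
    rw [hs, one_div]
    exact Complex.cpow_inv_two_re w
  set D : ℝ := 2 * ‖s‖ * s.re with hD
  clear_value s D
  have hwre_nonneg : 0 ≤ ‖w‖ + w.re := by
    have := (abs_le.mp (Complex.abs_re_le_norm w)).1
    linarith
  have hD2 : D ^ 2 = 2 * (‖w‖ * (‖w‖ + w.re)) := by
    rw [hD, hsre]
    have : (2 * ‖s‖ * Real.sqrt ((‖w‖ + w.re) / 2)) ^ 2 =
        4 * ‖s‖ ^ 2 * Real.sqrt ((‖w‖ + w.re) / 2) ^ 2 := by ring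
    rw [this, Real.sq_sqrt (by linarith), habss]
    ring
  have hDnn : 0 ≤ D := by
    rw [hD, hsre]
    exact mul_nonneg (mul_nonneg (by norm_num) (norm_nonneg s)) (Real.sqrt_nonneg _)
  have hsq : 0 < Real.sqrt (2 * k) := Real.sqrt_pos.mpr (by linarith)
  have hDlb : Real.sqrt (2 * k) * r ≤ D := by
    have h1 : (Real.sqrt (2 * k) * r) ^ 2 ≤ D ^ 2 := by
      rw [hD2, mul_pow, Real.sq_sqrt (by linarith : (0:ℝ) ≤ 2 * k)]
      nlinarith [hkey]
    have h2 : 0 ≤ Real.sqrt (2 * k) * r := mul_nonneg hsq.le hrpos.le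
    nlinarith [h1, h2, hDnn]
  have hDpos : 0 < D := lt_of_lt_of_le (mul_pos hsq hrpos) hDlb
  rw [div_le_iff₀ hDpos]
  calc r = 1 / Real.sqrt (2 * k) * (Real.sqrt (2 * k) * r) := by
        field_simp
    _ ≤ 1 / Real.sqrt (2 * k) * D :=
        mul_le_mul_of_nonneg_left hDlb (by positivity)
end
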